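/- The Whittaker module W_{hc}(φ) over the Heisenberg-Clifford algebra is simple if and only if φ(k) ≠ 0. -/

import Mathlib

/-- A representation of the Heisenberg-Clifford Lie superalgebra `hc` on a complex
vector space: `A n`, `B n` are the actions of the even generators `a_n, b_n`,
`C j` is the action of the odd generator `c_{j+1/2}`, and the central element
`k` acts by the scalar `κ`. -/
structure HCRep (V : Type*) [AddCommGroup V] [Module ℂ V] where
  A : ℤ → Module.End ℂ V
  B : ℤ → Module.End ℂ V
  C : ℤ → Module.End ℂ V
  κ : ℂ
  comm_AB : ∀ m n : ℤ,
    ⁅A m, B n⁆ = (if m + n = 0 then (m : ℂ) * κ else 0) • (1 : Module.End ℂ V)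
  comm_AA : ∀ m n : ℤ, ⁅A m, A n⁆ = 0
  comm_BB : ∀ m n : ℤ, ⁅B m, B n⁆ = 0
  comm_AC : ∀ m j : ℤ, ⁅A m, C j⁆ = 0
  comm_BC : ∀ m j : ℤ, ⁅B m, C j⁆ = 0
  anti_CC : ∀ j l : ℤ, C j * C l + C l * C j
    = (if j + l + 1 = 0 then κ else 0) • (1 : Module.End ℂ V)

namespace HCRep

variable {V : Type*} [AddCommGroup V] [Module ℂ V]

/-- A submodule invariant under the `hc`-action. -/
def Invariant (ρ : HCRep V) (W : Submodule ℂ V) : Prop :=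
  ∀ w ∈ W, ∀ n : ℤ, ρ.A n w ∈ W ∧ ρ.B n w ∈ W ∧ ρ.C n w ∈ W

/-- Simplicity of an `hc`-module. -/
def IsSimple (ρ : HCRep V) : Prop :=
  (∃ v : V, v ≠ 0) ∧ ∀ W : Submodule ℂ V, ρ.Invariant W → W = ⊥ ∨ W = ⊤

/-- Smoothness: every vector is killed by all sufficiently positive modes. -/
def IsSmooth (ρ : HCRep V) : Prop :=
  ∀ w : V, ∃ N : ℤ, ∀ i : ℤ, N ≤ i → ρ.A i w = 0 ∧ ρ.B i w = 0 ∧ ρ.C (i - 1) w = 0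

end HCRep

/-- `tower f N = f N * ⋯ * f 2 * f 1` (empty product for `N = 0`). -/
def tower {V : Type*} [AddCommGroup V] [Module ℂ V]
    (f : ℕ → Module.End ℂ V) : ℕ → Module.End ℂ V
  | 0 => 1
  | n + 1 => f (n + 1) * tower f n

/-- Index set for the PBW basis of an `hc`-Whittaker (or Verma) module:
exponents of `a_{-n}, b_{-n} (n ≥ 1)` and sets of factors `c_{-n+1/2} (n ≥ 1)`. -/
structure HCIdx where
  i : ℕ →₀ ℕ
  j : ℕ →₀ ℕ
  K : Finset ℕ
  hi : i 0 = 0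
  hj : j 0 = 0
  hK : 0 ∉ K

namespace HCRep

variable {V : Type*} [AddCommGroup V] [Module ℂ V]

/-- The PBW monomial `c^K b^j a^i` in negative modes. -/
noncomputable def mon (ρ : HCRep V) (p : HCIdx) : Module.End ℂ V :=
  tower (fun n => if n ∈ p.K then ρ.C (-(n : ℤ)) else 1) (p.K.sup id) *
  tower (fun n => (ρ.B (-(n : ℤ)))^(p.j n)) (p.j.support.sup id) *
  tower (fun n => (ρ.A (-(n : ℤ)))^(p.i n)) (p.i.support.sup id)

/-- `(V, w)` is (a copy of) the Whittaker module `W_hc(φ)` attached to the Lie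
superalgebra homomorphism `φ : hc_+ ⊕ hc_0 → ℂ` given by its values
`φa, φb` on `a_n, b_n (n ≥ 0)` and `κ` on `k` (necessarily `φ(c_r) = 0` for
`r > 0`): `w` is a Whittaker vector and the PBW monomials in the negative
modes applied to `w` form a basis. -/
structure IsWhittaker (ρ : HCRep V) (w : V) (φa φb : ℤ → ℂ) : Prop where
  hwA : ∀ n : ℤ, 0 ≤ n → ρ.A n w = φa n • w
  hwB : ∀ n : ℤ, 0 ≤ n → ρ.B n w = φb n • w
  hwC : ∀ j : ℤ, 0 ≤ j → ρ.C j w = 0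
  indep : LinearIndependent ℂ (fun p : HCIdx => ρ.mon p w)
  span : Submodule.span ℂ (Set.range fun p : HCIdx => ρ.mon p w) = ⊤

end HCRep


section TowerLemmas
variable {V : Type*} [AddCommGroup V] [Module ℂ V]

lemma tower_succ (f : ℕ → Module.End ℂ V) (N : ℕ) :
    tower f (N + 1) = f (N + 1) * tower f N := rfl

lemma tower_congr {f f' : ℕ → Module.End ℂ V} {N : ℕ}
    (h : ∀ m, 1 ≤ m → m ≤ N → f m = f' m) : tower f N = tower f' N := by
  induction N with
  | zero => rfl
  | succ N ih =>
    rw [tower_succ, tower_succ, h (N+1) (by omega) le_rfl,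
      ih (fun m h1 h2 => h m h1 (by omega))]

lemma tower_ext (f : ℕ → Module.End ℂ V) {M N : ℕ} (hMN : M ≤ N)
    (h : ∀ m, M < m → m ≤ N → f m = 1) : tower f N = tower f M := by
  induction N with
  | zero => rw [Nat.le_zero.mp hMN]
  | succ N ih =>
    rcases eq_or_lt_of_le hMN with rfl | hlt
    · rfl
    · rw [tower_succ, h (N+1) hlt le_rfl, one_mul,
        ih (by omega) (fun m h1 h2 => h m h1 (by omega))]

lemma tower_comm (f : ℕ → Module.End ℂ V) (X : Module.End ℂ V) (N : ℕ)
    (h : ∀ m, 1 ≤ m → m ≤ N → X * f m = f m * X) :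
    X * tower f N = tower f N * X := by
  induction N with
  | zero => simp [tower]
  | succ N ih =>
    rw [tower_succ, ← mul_assoc, h (N+1) (by omega) le_rfl, mul_assoc,
      ih (fun m h1 h2 => h m h1 (by omega)), mul_assoc]

lemma tower_mul_update (f : ℕ → Module.End ℂ V) (X : Module.End ℂ V) {n N : ℕ}
    (h1 : 1 ≤ n) (hN : n ≤ N)
    (h : ∀ m, n < m → m ≤ N → X * f m = f m * X) :
    X * tower f N = tower (Function.update f n (X * f n)) N := by
  induction N with
  | zero => omega
  | succ N ih =>
    rcases eq_or_lt_of_le hN with rfl | hlt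
    · rw [tower_succ, tower_succ, Function.update_self, ← mul_assoc]
      congr 1
      exact tower_congr fun m hm1 hm2 => (Function.update_of_ne (by omega) _ _).symm
    · have hn : n ≤ N := by omega
      rw [tower_succ, ← mul_assoc, h (N+1) (by omega) le_rfl, mul_assoc,
        ih hn (fun m hm1 hm2 => h m hm1 (by omega)), tower_succ,
        Function.update_of_ne (by omega)]

lemma tower_update_mul (f : ℕ → Module.End ℂ V) (X : Module.End ℂ V) {n N : ℕ}
    (h1 : 1 ≤ n) (hN : n ≤ N)
    (h : ∀ m, 1 ≤ m → m < n → X * f m = f m * X) :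
    tower (Function.update f n (f n * X)) N = tower f N * X := by
  induction N with
  | zero => omega
  | succ N ih =>
    rcases eq_or_lt_of_le hN with rfl | hlt
    · rw [tower_succ, tower_succ, Function.update_self,
        tower_congr (f := Function.update f (N+1) (f (N+1) * X)) (f' := f)
          (fun m hm1 hm2 => Function.update_of_ne (by omega) _ _),
        mul_assoc, tower_comm f X N (fun m hm1 hm2 => h m hm1 (by omega)), ← mul_assoc]
    · rw [tower_succ, tower_succ, Function.update_of_ne (by omega),
        ih (by omega), mul_assoc]

lemma tower_update_add (f : ℕ → Module.End ℂ V) (a b : Module.End ℂ V) {n N : ℕ}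
    (h1 : 1 ≤ n) (hN : n ≤ N) :
    tower (Function.update f n (a + b)) N
      = tower (Function.update f n a) N + tower (Function.update f n b) N := by
  induction N with
  | zero => omega
  | succ N ih =>
    rcases eq_or_lt_of_le hN with rfl | hlt
    · have key : ∀ g : Module.End ℂ V, tower (Function.update f (N+1) g) N = tower f N :=
        fun g => tower_congr (fun m hm1 hm2 => Function.update_of_ne (by omega) _ _)
      rw [tower_succ, tower_succ, tower_succ, Function.update_self,
        Function.update_self, Function.update_self, key, key, key, add_mul]
    · simp only [tower_succ, Function.update_of_ne (show (N+1:ℕ) ≠ n by omega),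
        ih (by omega), mul_add]

lemma tower_update_smul (f : ℕ → Module.End ℂ V) (c : ℂ) (a : Module.End ℂ V) {n N : ℕ}
    (h1 : 1 ≤ n) (hN : n ≤ N) :
    tower (Function.update f n (c • a)) N = c • tower (Function.update f n a) N := by
  induction N with
  | zero => omega
  | succ N ih =>
    rcases eq_or_lt_of_le hN with rfl | hlt
    · have key : ∀ g : Module.End ℂ V, tower (Function.update f (N+1) g) N = tower f N :=
        fun g => tower_congr (fun m hm1 hm2 => Function.update_of_ne (by omega) _ _)
      rw [tower_succ, tower_succ, Function.update_self, Function.update_self, key, key,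
        smul_mul_assoc]
    · simp only [tower_succ, Function.update_of_ne (show (N+1:ℕ) ≠ n by omega),
        ih (by omega), mul_smul_comm]

lemma pow_bracket (X Y : Module.End ℂ V) (c : ℂ) (h : X * Y = Y * X + c • 1) :
    ∀ e : ℕ, X * Y ^ e = Y ^ e * X + ((e : ℂ) * c) • Y ^ (e - 1)
  | 0 => by simp
  | 1 => by simpa using h
  | (e + 2) => by
    have he : X * Y ^ (e + 1) = Y ^ (e + 1) * X + (((e : ℂ) + 1) * c) • Y ^ e := by
      have := pow_bracket X Y c h (e + 1)
      simpa [Nat.add_sub_cancel, Nat.cast_add, Nat.cast_one] using this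
    show X * Y ^ (e + 2) = Y ^ (e + 2) * X + ((↑(e + 2) : ℂ) * c) • Y ^ (e + 1)
    calc X * Y ^ (e + 2) = (X * Y ^ (e + 1)) * Y := by rw [pow_succ, mul_assoc]
      _ = (Y ^ (e + 1) * X + (((e : ℂ) + 1) * c) • Y ^ e) * Y := by rw [he]
      _ = Y ^ (e + 1) * (X * Y) + (((e : ℂ) + 1) * c) • (Y ^ e * Y) := by
          rw [add_mul, smul_mul_assoc, mul_assoc]
      _ = Y ^ (e + 1) * (Y * X) + Y ^ (e + 1) * (c • 1) + (((e : ℂ) + 1) * c) • Y ^ (e + 1) := by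
          rw [h, mul_add, ← pow_succ]
      _ = Y ^ (e + 2) * X + (c • Y ^ (e + 1) + (((e : ℂ) + 1) * c) • Y ^ (e + 1)) := by
          rw [← mul_assoc, ← pow_succ (n := e + 1), mul_smul_comm, mul_one, add_assoc]
      _ = Y ^ (e + 2) * X + ((↑(e + 2) : ℂ) * c) • Y ^ (e + 1) := by
          rw [← add_smul]
          push_cast
          ring_nf

end TowerLemmas

section IdxLemmas
open Finsupp

lemma HCIdx.ext' {p q : HCIdx} (h1 : p.i = q.i) (h2 : p.j = q.j) (h3 : p.K = q.K) : p = q := by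
  cases p; cases q; simp_all

/-- decrement `j` at `n` -/
noncomputable def pJ (n : ℕ) (p : HCIdx) : HCIdx :=
  ⟨p.i, p.j.update n (p.j n - 1), p.K, p.hi, by
    rcases eq_or_ne n 0 with rfl | hn
    · simp [Finsupp.coe_update, p.hj]
    · simp [Finsupp.coe_update, Function.update_of_ne (Ne.symm hn), p.hj], p.hK⟩

/-- decrement `i` at `n` -/
noncomputable def pI (n : ℕ) (p : HCIdx) : HCIdx :=
  ⟨p.i.update n (p.i n - 1), p.j, p.K, by
    rcases eq_or_ne n 0 with rfl | hn
    · simp [Finsupp.coe_update, p.hi]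
    · simp [Finsupp.coe_update, Function.update_of_ne (Ne.symm hn), p.hi], p.hj, p.hK⟩

/-- remove `n` from `K` -/
def pK (n : ℕ) (p : HCIdx) : HCIdx :=
  ⟨p.i, p.j, p.K.erase n, p.hi, p.hj, fun h => p.hK (Finset.erase_subset _ _ h)⟩

@[simp] lemma pJ_i (n : ℕ) (p : HCIdx) : (pJ n p).i = p.i := rfl
@[simp] lemma pJ_j (n : ℕ) (p : HCIdx) : (pJ n p).j = p.j.update n (p.j n - 1) := rfl
@[simp] lemma pJ_K (n : ℕ) (p : HCIdx) : (pJ n p).K = p.K := rfl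
@[simp] lemma pI_i (n : ℕ) (p : HCIdx) : (pI n p).i = p.i.update n (p.i n - 1) := rfl
@[simp] lemma pI_j (n : ℕ) (p : HCIdx) : (pI n p).j = p.j := rfl
@[simp] lemma pI_K (n : ℕ) (p : HCIdx) : (pI n p).K = p.K := rfl
@[simp] lemma pK_i (n : ℕ) (p : HCIdx) : (pK n p).i = p.i := rfl
@[simp] lemma pK_j (n : ℕ) (p : HCIdx) : (pK n p).j = p.j := rfl
@[simp] lemma pK_K (n : ℕ) (p : HCIdx) : (pK n p).K = p.K.erase n := rfl

/-- total degree -/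
def deg (p : HCIdx) : ℕ :=
  p.i.sum (fun _ e => e) + p.j.sum (fun _ e => e) + p.K.card

/-- the trivial index -/
def pTriv : HCIdx := ⟨0, 0, ∅, rfl, rfl, by simp⟩

lemma sum_update_pred {f : ℕ →₀ ℕ} {n : ℕ} (hf : f n ≠ 0) :
    (f.update n (f n - 1)).sum (fun _ e => e) + 1 = f.sum (fun _ e => e) := by
  have h2 : (f.update n (f n - 1)).sum (fun _ e => e) + f n
      = f.sum (fun _ e => e) + (f n - 1) :=
    Finsupp.sum_update_add f n (f n - 1) (fun _ e => e) (fun _ => rfl) (fun _ _ _ => rfl)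
  omega

lemma deg_pJ {p : HCIdx} {n : ℕ} (h : p.j n ≠ 0) : deg (pJ n p) + 1 = deg p := by
  have := sum_update_pred h
  simp only [deg, pJ]
  omega

lemma deg_pI {p : HCIdx} {n : ℕ} (h : p.i n ≠ 0) : deg (pI n p) + 1 = deg p := by
  have := sum_update_pred h
  simp only [deg, pI]
  omega

lemma deg_pK {p : HCIdx} {n : ℕ} (h : n ∈ p.K) : deg (pK n p) + 1 = deg p := by
  simp only [deg, pK, Finset.card_erase_of_mem h]
  have : 1 ≤ p.K.card := Finset.card_pos.mpr ⟨n, h⟩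
  omega

lemma update_pred_inj {f g : ℕ →₀ ℕ} {n : ℕ} (hf : f n ≠ 0) (hg : g n ≠ 0)
    (h : f.update n (f n - 1) = g.update n (g n - 1)) : f = g := by
  ext m
  have hm := DFunLike.congr_fun h m
  rcases eq_or_ne m n with rfl | hmn
  · simp only [Finsupp.coe_update, Function.update_self] at hm
    omega
  · simpa [Finsupp.coe_update, Function.update_of_ne hmn] using hm

lemma pJ_inj {p q : HCIdx} {n : ℕ} (hp : p.j n ≠ 0) (hq : q.j n ≠ 0)
    (h : pJ n p = pJ n q) : p = q := by
  have h1 := congrArg HCIdx.i h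
  have h2 := congrArg HCIdx.j h
  have h3 := congrArg HCIdx.K h
  simp only [pJ_i, pJ_j, pJ_K] at h1 h2 h3
  exact HCIdx.ext' h1 (update_pred_inj hp hq h2) h3

lemma pI_inj {p q : HCIdx} {n : ℕ} (hp : p.i n ≠ 0) (hq : q.i n ≠ 0)
    (h : pI n p = pI n q) : p = q := by
  have h1 := congrArg HCIdx.i h
  have h2 := congrArg HCIdx.j h
  have h3 := congrArg HCIdx.K h
  simp only [pI_i, pI_j, pI_K] at h1 h2 h3
  exact HCIdx.ext' (update_pred_inj hp hq h1) h2 h3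

lemma pK_inj {p q : HCIdx} {n : ℕ} (hp : n ∈ p.K) (hq : n ∈ q.K)
    (h : pK n p = pK n q) : p = q := by
  have h1 := congrArg HCIdx.i h
  have h2 := congrArg HCIdx.j h
  have h3 := congrArg HCIdx.K h
  simp only [pK_i, pK_j, pK_K] at h1 h2 h3
  refine HCIdx.ext' h1 h2 ?_
  rw [← Finset.insert_erase hp, ← Finset.insert_erase hq, h3]

lemma sum_eq_zero_finsupp {f : ℕ →₀ ℕ} (h : f.sum (fun _ e => e) = 0) : f = 0 := by
  ext m
  rcases eq_or_ne (f m) 0 with h0 | h0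
  · simp [h0]
  · exfalso
    have hm : m ∈ f.support := Finsupp.mem_support_iff.mpr h0
    have := Finset.sum_eq_zero_iff.mp h m hm
    exact h0 this

lemma deg_eq_zero {p : HCIdx} (h : deg p = 0) : p = pTriv := by
  have h1 : p.i.sum (fun _ e => e) = 0 := by unfold deg at h; omega
  have h2 : p.j.sum (fun _ e => e) = 0 := by unfold deg at h; omega
  have h3 : p.K.card = 0 := by unfold deg at h; omega
  exact HCIdx.ext' (sum_eq_zero_finsupp h1) (sum_eq_zero_finsupp h2)
    (by simpa [pTriv] using Finset.card_eq_zero.mp h3)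

lemma apply_eq_zero_of_sup_lt {f : ℕ →₀ ℕ} {m : ℕ} (hm : f.support.sup id < m) : f m = 0 := by
  by_contra h0
  exact absurd (Finset.le_sup (f := id) (Finsupp.mem_support_iff.mpr h0)) (by simpa using hm.not_ge)

lemma mem_K_le_sup {K : Finset ℕ} {m : ℕ} (hm : m ∈ K) : m ≤ K.sup id :=
  Finset.le_sup (f := id) hm

end IdxLemmas

section OpLemmas
variable {V : Type*} [AddCommGroup V] [Module ℂ V] (ρ : HCRep V)

lemma mul_A_B (m n : ℤ) : ρ.A m * ρ.B n
    = ρ.B n * ρ.A m + (if m + n = 0 then (m : ℂ) * ρ.κ else 0) • 1 := by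
  have h := ρ.comm_AB m n
  rw [Ring.lie_def, sub_eq_iff_eq_add] at h
  rw [h, add_comm]

lemma mul_B_A (m n : ℤ) : ρ.B n * ρ.A m
    = ρ.A m * ρ.B n + (if m + n = 0 then -((m : ℂ) * ρ.κ) else 0) • 1 := by
  rw [mul_A_B]
  split <;> simp

lemma commAB (m n : ℤ) (h : m + n ≠ 0) : ρ.A m * ρ.B n = ρ.B n * ρ.A m := by
  rw [mul_A_B, if_neg h, zero_smul, add_zero]

lemma commAA (m n : ℤ) : ρ.A m * ρ.A n = ρ.A n * ρ.A m := by
  have h := ρ.comm_AA m n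
  rw [Ring.lie_def, sub_eq_zero] at h
  exact h

lemma commBB (m n : ℤ) : ρ.B m * ρ.B n = ρ.B n * ρ.B m := by
  have h := ρ.comm_BB m n
  rw [Ring.lie_def, sub_eq_zero] at h
  exact h

lemma commAC (m j : ℤ) : ρ.A m * ρ.C j = ρ.C j * ρ.A m := by
  have h := ρ.comm_AC m j
  rw [Ring.lie_def, sub_eq_zero] at h
  exact h

lemma commBC (m j : ℤ) : ρ.B m * ρ.C j = ρ.C j * ρ.B m := by
  have h := ρ.comm_BC m j
  rw [Ring.lie_def, sub_eq_zero] at h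
  exact h

lemma mul_C_C (j l : ℤ) : ρ.C j * ρ.C l
    = -(ρ.C l * ρ.C j) + (if j + l + 1 = 0 then ρ.κ else 0) • 1 := by
  have h := ρ.anti_CC j l
  rw [← h]
  abel

/-- assembly: interaction in the middle slot -/
lemma assembleMid (Tc Tb Ta Tb' X : Module.End ℂ V) (c : ℂ)
    (hc : X * Tc = Tc * X) (ha : X * Ta = Ta * X)
    (hb : X * Tb = Tb * X + c • Tb') :
    X * (Tc * Tb * Ta) = (Tc * Tb * Ta) * X + c • (Tc * Tb' * Ta) := by
  calc X * (Tc * Tb * Ta) = (X * Tc) * (Tb * Ta) := by rw [mul_assoc, ← mul_assoc]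
    _ = Tc * ((X * Tb) * Ta) := by rw [hc, mul_assoc, ← mul_assoc X]
    _ = Tc * ((Tb * X + c • Tb') * Ta) := by rw [hb]
    _ = Tc * (Tb * (X * Ta)) + c • (Tc * (Tb' * Ta)) := by
        rw [add_mul, mul_add, smul_mul_assoc, mul_smul_comm, mul_assoc Tb]
    _ = (Tc * Tb * Ta) * X + c • (Tc * Tb' * Ta) := by
        rw [ha]; simp only [mul_assoc]

/-- assembly: interaction in the right slot -/
lemma assembleRight (Tc Tb Ta Ta' X : Module.End ℂ V) (c : ℂ)
    (hc : X * Tc = Tc * X) (hb : X * Tb = Tb * X)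
    (ha : X * Ta = Ta * X + c • Ta') :
    X * (Tc * Tb * Ta) = (Tc * Tb * Ta) * X + c • (Tc * Tb * Ta') := by
  calc X * (Tc * Tb * Ta) = (X * Tc) * (Tb * Ta) := by rw [mul_assoc, ← mul_assoc]
    _ = Tc * ((X * Tb) * Ta) := by rw [hc, mul_assoc, ← mul_assoc X]
    _ = Tc * (Tb * (X * Ta)) := by rw [hb, mul_assoc]
    _ = Tc * (Tb * (Ta * X + c • Ta')) := by rw [ha]
    _ = (Tc * Tb * Ta) * X + c • (Tc * Tb * Ta') := by
        simp only [mul_add, mul_smul_comm, mul_assoc]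

/-- assembly: interaction in the left slot, with sign -/
lemma assembleLeft (Tc Tb Ta Tc' X : Module.End ℂ V) (σ ε : ℂ)
    (hc : X * Tc = σ • (Tc * X) + ε • Tc')
    (hb : X * Tb = Tb * X) (ha : X * Ta = Ta * X) :
    X * (Tc * Tb * Ta) = σ • ((Tc * Tb * Ta) * X) + ε • (Tc' * Tb * Ta) := by
  have h1 : X * (Tb * Ta) = (Tb * Ta) * X := by
    rw [← mul_assoc, hb, mul_assoc, ha, mul_assoc]
  calc X * (Tc * Tb * Ta) = (X * Tc) * (Tb * Ta) := by rw [mul_assoc, ← mul_assoc]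
    _ = σ • (Tc * (X * (Tb * Ta))) + ε • (Tc' * (Tb * Ta)) := by
        rw [hc, add_mul, smul_mul_assoc, smul_mul_assoc, mul_assoc]
    _ = σ • ((Tc * Tb * Ta) * X) + ε • (Tc' * Tb * Ta) := by
        rw [h1, ← mul_assoc, ← mul_assoc, ← mul_assoc, mul_assoc Tc Tb Ta]

end OpLemmas

section ActLemmas
variable {V : Type*} [AddCommGroup V] [Module ℂ V] (ρ : HCRep V)

/-- the three slot functions of a monomial -/
noncomputable def fCs (K : Finset ℕ) : ℕ → Module.End ℂ V :=
  fun m => if m ∈ K then ρ.C (-(m : ℤ)) else 1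
noncomputable def fBs (j : ℕ →₀ ℕ) : ℕ → Module.End ℂ V :=
  fun m => (ρ.B (-(m : ℤ))) ^ (j m)
noncomputable def fAs (i : ℕ →₀ ℕ) : ℕ → Module.End ℂ V :=
  fun m => (ρ.A (-(m : ℤ))) ^ (i m)

lemma mon_eq (p : HCIdx) :
    ρ.mon p = tower (fCs ρ p.K) (p.K.sup id) * tower (fBs ρ p.j) (p.j.support.sup id)
      * tower (fAs ρ p.i) (p.i.support.sup id) := rfl

lemma sup_support_update_pred (j : ℕ →₀ ℕ) (n : ℕ) :
    (j.update n (j n - 1)).support.sup id ≤ j.support.sup id := by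
  apply Finset.sup_mono
  intro m hm
  rw [Finsupp.mem_support_iff] at hm ⊢
  rcases eq_or_ne m n with rfl | hmn
  · simp only [Finsupp.coe_update, Function.update_self] at hm
    omega
  · simpa [Finsupp.coe_update, Function.update_of_ne hmn] using hm

/-- reduced middle tower equals the monomial slot of the decremented index -/
lemma towerB_reduced (j : ℕ →₀ ℕ) (n : ℕ) :
    tower (Function.update (fBs ρ j) n ((ρ.B (-(n:ℤ))) ^ (j n - 1))) (j.support.sup id)
      = tower (fBs ρ (j.update n (j n - 1))) ((j.update n (j n - 1)).support.sup id) := by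
  have h1 : Function.update (fBs ρ j) n ((ρ.B (-(n:ℤ))) ^ (j n - 1))
      = fBs ρ (j.update n (j n - 1)) := by
    funext m
    rcases eq_or_ne m n with rfl | hmn
    · simp [fBs, Finsupp.coe_update]
    · simp [fBs, Finsupp.coe_update, Function.update_of_ne hmn]
  rw [h1]
  exact tower_ext _ (sup_support_update_pred j n) (fun m h1 h2 => by
    have h0 : (j.update n (j n - 1)) m = 0 := apply_eq_zero_of_sup_lt h1
    simp [fBs, h0])

lemma towerA_reduced (i : ℕ →₀ ℕ) (n : ℕ) :
    tower (Function.update (fAs ρ i) n ((ρ.A (-(n:ℤ))) ^ (i n - 1))) (i.support.sup id)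
      = tower (fAs ρ (i.update n (i n - 1))) ((i.update n (i n - 1)).support.sup id) := by
  have h1 : Function.update (fAs ρ i) n ((ρ.A (-(n:ℤ))) ^ (i n - 1))
      = fAs ρ (i.update n (i n - 1)) := by
    funext m
    rcases eq_or_ne m n with rfl | hmn
    · simp [fAs, Finsupp.coe_update]
    · simp [fAs, Finsupp.coe_update, Function.update_of_ne hmn]
  rw [h1]
  exact tower_ext _ (sup_support_update_pred i n) (fun m h1 h2 => by
    have h0 : (i.update n (i n - 1)) m = 0 := apply_eq_zero_of_sup_lt h1
    simp [fAs, h0])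

/-- commutation of `A n` through the middle tower -/
lemma A_tower_B (n : ℕ) (hn : 1 ≤ n) (j : ℕ →₀ ℕ) :
    ρ.A (n : ℤ) * tower (fBs ρ j) (j.support.sup id)
      = tower (fBs ρ j) (j.support.sup id) * ρ.A (n : ℤ)
        + ((j n : ℂ) * ((n : ℂ) * ρ.κ)) • tower (fBs ρ (j.update n (j n - 1)))
            ((j.update n (j n - 1)).support.sup id) := by
  set X := ρ.A (n : ℤ) with hX
  have hcomm : ∀ m : ℕ, m ≠ n → X * fBs ρ j m = fBs ρ j m * X := by
    intro m hmn
    have hc : Commute X (ρ.B (-(m:ℤ))) := commAB ρ (n:ℤ) (-(m:ℤ)) (by omega)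
    exact (hc.pow_right (j m)).eq
  by_cases h0 : j n = 0
  · have : X * tower (fBs ρ j) (j.support.sup id) = tower (fBs ρ j) (j.support.sup id) * X := by
      apply tower_comm
      intro m h1 h2
      rcases eq_or_ne m n with rfl | hmn
      · simp [fBs, h0]
      · exact hcomm m hmn
    rw [this, h0]
    simp
  · have hnN : n ≤ j.support.sup id := Finset.le_sup (f := id) (Finsupp.mem_support_iff.mpr h0)
    have hXfn : X * fBs ρ j n = fBs ρ j n * X
        + ((j n : ℂ) * ((n : ℂ) * ρ.κ)) • (ρ.B (-(n:ℤ))) ^ (j n - 1) := by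
      apply pow_bracket
      have h := mul_A_B ρ (n : ℤ) (-(n : ℤ))
      rwa [if_pos (by omega)] at h
    calc X * tower (fBs ρ j) (j.support.sup id)
        = tower (Function.update (fBs ρ j) n (X * fBs ρ j n)) (j.support.sup id) :=
          tower_mul_update _ _ hn hnN (fun m hm1 hm2 => hcomm m (by omega))
      _ = tower (Function.update (fBs ρ j) n (fBs ρ j n * X)) (j.support.sup id)
          + tower (Function.update (fBs ρ j) n
              (((j n : ℂ) * ((n : ℂ) * ρ.κ)) • (ρ.B (-(n:ℤ))) ^ (j n - 1))) (j.support.sup id) := by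
          rw [hXfn, tower_update_add _ _ _ hn hnN]
      _ = tower (fBs ρ j) (j.support.sup id) * X
          + ((j n : ℂ) * ((n : ℂ) * ρ.κ)) • tower (Function.update (fBs ρ j) n
              ((ρ.B (-(n:ℤ))) ^ (j n - 1))) (j.support.sup id) := by
          rw [tower_update_mul _ _ hn hnN (fun m hm1 hm2 => hcomm m (by omega)),
            tower_update_smul _ _ _ hn hnN]
      _ = _ := by rw [towerB_reduced]

/-- commutation of `B n` through the right tower -/
lemma B_tower_A (n : ℕ) (hn : 1 ≤ n) (i : ℕ →₀ ℕ) :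
    ρ.B (n : ℤ) * tower (fAs ρ i) (i.support.sup id)
      = tower (fAs ρ i) (i.support.sup id) * ρ.B (n : ℤ)
        + ((i n : ℂ) * ((n : ℂ) * ρ.κ)) • tower (fAs ρ (i.update n (i n - 1)))
            ((i.update n (i n - 1)).support.sup id) := by
  set X := ρ.B (n : ℤ) with hX
  have hcomm : ∀ m : ℕ, m ≠ n → X * fAs ρ i m = fAs ρ i m * X := by
    intro m hmn
    have hc : Commute X (ρ.A (-(m:ℤ))) := (commAB ρ (-(m:ℤ)) (n:ℤ) (by omega)).symm
    exact (hc.pow_right (i m)).eq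
  by_cases h0 : i n = 0
  · have : X * tower (fAs ρ i) (i.support.sup id) = tower (fAs ρ i) (i.support.sup id) * X := by
      apply tower_comm
      intro m h1 h2
      rcases eq_or_ne m n with rfl | hmn
      · simp [fAs, h0]
      · exact hcomm m hmn
    rw [this, h0]
    simp
  · have hnN : n ≤ i.support.sup id := Finset.le_sup (f := id) (Finsupp.mem_support_iff.mpr h0)
    have hXfn : X * fAs ρ i n = fAs ρ i n * X
        + ((i n : ℂ) * ((n : ℂ) * ρ.κ)) • (ρ.A (-(n:ℤ))) ^ (i n - 1) := by
      apply pow_bracket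
      have h := mul_B_A ρ (-(n : ℤ)) (n : ℤ)
      rw [if_pos (by omega)] at h
      rw [h, hX]
      norm_num
    calc X * tower (fAs ρ i) (i.support.sup id)
        = tower (Function.update (fAs ρ i) n (X * fAs ρ i n)) (i.support.sup id) :=
          tower_mul_update _ _ hn hnN (fun m hm1 hm2 => hcomm m (by omega))
      _ = tower (Function.update (fAs ρ i) n (fAs ρ i n * X)) (i.support.sup id)
          + tower (Function.update (fAs ρ i) n
              (((i n : ℂ) * ((n : ℂ) * ρ.κ)) • (ρ.A (-(n:ℤ))) ^ (i n - 1))) (i.support.sup id) := by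
          rw [hXfn, tower_update_add _ _ _ hn hnN]
      _ = tower (fAs ρ i) (i.support.sup id) * X
          + ((i n : ℂ) * ((n : ℂ) * ρ.κ)) • tower (Function.update (fAs ρ i) n
              ((ρ.A (-(n:ℤ))) ^ (i n - 1))) (i.support.sup id) := by
          rw [tower_update_mul _ _ hn hnN (fun m hm1 hm2 => hcomm m (by omega)),
            tower_update_smul _ _ _ hn hnN]
      _ = _ := by rw [towerA_reduced]

end ActLemmas

section ActC
variable {V : Type*} [AddCommGroup V] [Module ℂ V] (ρ : HCRep V)

lemma neg_sign {σ : ℂ} (h : σ = 1 ∨ σ = -1) : -σ = 1 ∨ -σ = -1 := by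
  rcases h with rfl | rfl
  exacts [Or.inr rfl, Or.inl (by norm_num)]

lemma neg_eps {ε κ : ℂ} (h : ε = κ ∨ ε = -κ) : -ε = κ ∨ -ε = -κ := by
  rcases h with rfl | rfl
  exacts [Or.inr rfl, Or.inl (neg_neg κ)]

lemma C_anti (n m : ℕ) (hnm : m ≠ n) :
    ρ.C ((n:ℤ) - 1) * ρ.C (-(m:ℤ)) = -(ρ.C (-(m:ℤ)) * ρ.C ((n:ℤ) - 1)) := by
  have h := mul_C_C ρ ((n:ℤ) - 1) (-(m:ℤ))
  rwa [if_neg (by omega), zero_smul, add_zero] at h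

lemma C_kill (n : ℕ) :
    ρ.C ((n:ℤ) - 1) * ρ.C (-(n:ℤ)) = -(ρ.C (-(n:ℤ)) * ρ.C ((n:ℤ) - 1)) + ρ.κ • 1 := by
  have h := mul_C_C ρ ((n:ℤ) - 1) (-(n:ℤ))
  rwa [if_pos (by omega)] at h

lemma C_tower_comm (K : Finset ℕ) (n : ℕ) (N : ℕ)
    (h : ∀ m, 1 ≤ m → m ≤ N → m ∈ K → m ≠ n) :
    ∃ σ : ℂ, (σ = 1 ∨ σ = -1) ∧
      ρ.C ((n:ℤ) - 1) * tower (fCs ρ K) N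
        = σ • (tower (fCs ρ K) N * ρ.C ((n:ℤ) - 1)) := by
  induction N with
  | zero => exact ⟨1, Or.inl rfl, by simp [tower]⟩
  | succ N ih =>
    obtain ⟨σ, hσ, hcomm⟩ := ih (fun m h1 h2 hm => h m h1 (by omega) hm)
    by_cases hmem : N + 1 ∈ K
    · refine ⟨-σ, neg_sign hσ, ?_⟩
      have hf : fCs ρ K (N + 1) = ρ.C (-((N+1 : ℕ) : ℤ)) := by simp [fCs, hmem]
      rw [tower_succ, hf, ← mul_assoc,
        C_anti ρ n (N+1) (h (N+1) (by omega) le_rfl hmem), neg_mul, mul_assoc, hcomm,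
        mul_smul_comm, ← neg_smul, mul_assoc]
    · have hf : fCs ρ K (N + 1) = 1 := by simp [fCs, hmem]
      refine ⟨σ, hσ, ?_⟩
      rw [tower_succ, hf, one_mul, hcomm]

lemma C_tower_del (K : Finset ℕ) (n : ℕ) (hn : 1 ≤ n) (hmem : n ∈ K) :
    ∀ N : ℕ, n ≤ N →
    ∃ σ ε : ℂ, (σ = 1 ∨ σ = -1) ∧ (ε = ρ.κ ∨ ε = -ρ.κ) ∧
      ρ.C ((n:ℤ) - 1) * tower (fCs ρ K) N
        = σ • (tower (fCs ρ K) N * ρ.C ((n:ℤ) - 1)) + ε • tower (fCs ρ (K.erase n)) N := by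
  intro N
  induction N with
  | zero => omega
  | succ N ih =>
    intro hnN
    rcases eq_or_lt_of_le hnN with heq | hlt
    · -- n = N + 1
      obtain ⟨σ, hσ, hcomm⟩ := C_tower_comm ρ K n N (fun m h1 h2 hm => by omega)
      have hf : fCs ρ K (N + 1) = ρ.C (-((N+1 : ℕ) : ℤ)) := by
        simp [fCs, heq ▸ hmem]
      have hf' : fCs ρ (K.erase n) (N + 1) = 1 := by
        simp [fCs, Finset.mem_erase, heq]
      have hTeq : tower (fCs ρ (K.erase n)) N = tower (fCs ρ K) N := by
        apply tower_congr
        intro m h1 h2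
        simp only [fCs]
        have hmn : m ≠ n := by omega
        simp [Finset.mem_erase, hmn]
      refine ⟨-σ, ρ.κ, neg_sign hσ, Or.inl rfl, ?_⟩
      have hCN : ρ.C ((n:ℤ) - 1) * ρ.C (-((N+1:ℕ):ℤ)) =
          -(ρ.C (-((N+1:ℕ):ℤ)) * ρ.C ((n:ℤ) - 1)) + ρ.κ • 1 := by
        rw [show (-((N+1:ℕ):ℤ)) = (-(n:ℤ)) by omega]
        exact C_kill ρ n
      rw [tower_succ (fCs ρ (K.erase n)), hf', one_mul, hTeq,
        tower_succ, hf, ← mul_assoc, hCN, add_mul, neg_mul, mul_assoc, hcomm,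
        mul_smul_comm, ← neg_smul, mul_assoc, smul_mul_assoc, one_mul]
    · -- n ≤ N
      have hnN' : n ≤ N := by omega
      obtain ⟨σ, ε, hσ, hε, hcomm⟩ := ih hnN'
      by_cases hmem2 : N + 1 ∈ K
      · have hf : fCs ρ K (N + 1) = ρ.C (-((N+1 : ℕ) : ℤ)) := by simp [fCs, hmem2]
        have hf' : fCs ρ (K.erase n) (N + 1) = ρ.C (-((N+1 : ℕ) : ℤ)) := by
          simp [fCs, Finset.mem_erase, hmem2, show (N+1 : ℕ) ≠ n by omega]
        refine ⟨-σ, -ε, neg_sign hσ, neg_eps hε, ?_⟩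
        rw [tower_succ, hf, ← mul_assoc, C_anti ρ n (N+1) (by omega), neg_mul, mul_assoc,
          hcomm, tower_succ (fCs ρ (K.erase n)), hf']
        simp only [mul_add, mul_smul_comm, neg_add, ← neg_smul, ← mul_assoc]
      · have hf : fCs ρ K (N + 1) = 1 := by simp [fCs, hmem2]
        have hf' : fCs ρ (K.erase n) (N + 1) = 1 := by
          simp [fCs, Finset.mem_erase, hmem2]
        refine ⟨σ, ε, hσ, hε, ?_⟩
        rw [tower_succ, hf, one_mul, hcomm, tower_succ (fCs ρ (K.erase n)), hf', one_mul]

end ActC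

section MonAct
variable {V : Type*} [AddCommGroup V] [Module ℂ V] (ρ : HCRep V)

lemma A_tower_C (X : Module.End ℂ V) (hX : ∀ j : ℤ, X * ρ.C j = ρ.C j * X)
    (K : Finset ℕ) (N : ℕ) : X * tower (fCs ρ K) N = tower (fCs ρ K) N * X := by
  apply tower_comm
  intro m h1 h2
  by_cases hm : m ∈ K
  · simpa only [fCs, if_pos hm] using hX (-(m:ℤ))
  · simp only [fCs, if_neg hm, mul_one, one_mul]

lemma A_mon (n : ℕ) (hn : 1 ≤ n) (p : HCIdx) :
    ρ.A (n:ℤ) * ρ.mon p = ρ.mon p * ρ.A (n:ℤ)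
      + ((p.j n : ℂ) * ((n:ℂ) * ρ.κ)) • ρ.mon (pJ n p) := by
  rw [mon_eq, mon_eq]
  simp only [pJ_i, pJ_j, pJ_K]
  apply assembleMid
  · exact A_tower_C ρ _ (fun j => commAC ρ _ _) _ _
  · apply tower_comm
    intro m h1 h2
    have hc : Commute (ρ.A (n:ℤ)) (ρ.A (-(m:ℤ))) := commAA ρ _ _
    exact (hc.pow_right (p.i m)).eq
  · exact A_tower_B ρ n hn p.j

lemma B_mon (n : ℕ) (hn : 1 ≤ n) (p : HCIdx) :
    ρ.B (n:ℤ) * ρ.mon p = ρ.mon p * ρ.B (n:ℤ)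
      + ((p.i n : ℂ) * ((n:ℂ) * ρ.κ)) • ρ.mon (pI n p) := by
  rw [mon_eq, mon_eq]
  simp only [pI_i, pI_j, pI_K]
  apply assembleRight
  · exact A_tower_C ρ _ (fun j => commBC ρ _ _) _ _
  · apply tower_comm
    intro m h1 h2
    have hc : Commute (ρ.B (n:ℤ)) (ρ.B (-(m:ℤ))) := commBB ρ _ _
    exact (hc.pow_right (p.j m)).eq
  · exact B_tower_A ρ n hn p.i

lemma C_tower_B (n : ℕ) (j : ℕ →₀ ℕ) (N : ℕ) :
    ρ.C ((n:ℤ)-1) * tower (fBs ρ j) N = tower (fBs ρ j) N * ρ.C ((n:ℤ)-1) := by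
  apply tower_comm
  intro m h1 h2
  have hc : Commute (ρ.C ((n:ℤ)-1)) (ρ.B (-(m:ℤ))) := (commBC ρ (-(m:ℤ)) ((n:ℤ)-1)).symm
  exact (hc.pow_right (j m)).eq

lemma C_tower_A (n : ℕ) (i : ℕ →₀ ℕ) (N : ℕ) :
    ρ.C ((n:ℤ)-1) * tower (fAs ρ i) N = tower (fAs ρ i) N * ρ.C ((n:ℤ)-1) := by
  apply tower_comm
  intro m h1 h2
  have hc : Commute (ρ.C ((n:ℤ)-1)) (ρ.A (-(m:ℤ))) := (commAC ρ (-(m:ℤ)) ((n:ℤ)-1)).symm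
  exact (hc.pow_right (i m)).eq

lemma C_mon_del (n : ℕ) (hn : 1 ≤ n) (p : HCIdx) (hmem : n ∈ p.K) :
    ∃ σ ε : ℂ, (σ = 1 ∨ σ = -1) ∧ (ε = ρ.κ ∨ ε = -ρ.κ) ∧
      ρ.C ((n:ℤ)-1) * ρ.mon p
        = σ • (ρ.mon p * ρ.C ((n:ℤ)-1)) + ε • ρ.mon (pK n p) := by
  obtain ⟨σ, ε, hσ, hε, hcomm⟩ :=
    C_tower_del ρ p.K n hn hmem (p.K.sup id) (mem_K_le_sup hmem)
  refine ⟨σ, ε, hσ, hε, ?_⟩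
  have hred : tower (fCs ρ (p.K.erase n)) (p.K.sup id)
      = tower (fCs ρ (p.K.erase n)) ((p.K.erase n).sup id) :=
    tower_ext _ (Finset.sup_mono (Finset.erase_subset _ _)) (fun m h1 h2 => by
      have hm : m ∉ p.K.erase n := fun hmm => absurd (mem_K_le_sup hmm) (by omega)
      simp [fCs, hm])
  rw [mon_eq, mon_eq]
  simp only [pK_i, pK_j, pK_K]
  rw [← hred]
  exact assembleLeft _ _ _ _ _ σ ε hcomm (C_tower_B ρ n p.j _) (C_tower_A ρ n p.i _)

lemma C_mon_comm (n : ℕ) (p : HCIdx) (hmem : n ∉ p.K) :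
    ∃ σ : ℂ, (σ = 1 ∨ σ = -1) ∧
      ρ.C ((n:ℤ)-1) * ρ.mon p = σ • (ρ.mon p * ρ.C ((n:ℤ)-1)) := by
  obtain ⟨σ, hσ, hcomm⟩ := C_tower_comm ρ p.K n (p.K.sup id)
    (fun m h1 h2 hm => fun hcontra => hmem (hcontra ▸ hm))
  refine ⟨σ, hσ, ?_⟩
  rw [mon_eq]
  have h := assembleLeft (tower (fCs ρ p.K) (p.K.sup id))
    (tower (fBs ρ p.j) (p.j.support.sup id))
    (tower (fAs ρ p.i) (p.i.support.sup id)) 1 (ρ.C ((n:ℤ)-1)) σ 0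
    (by rw [zero_smul, add_zero]; exact hcomm) (C_tower_B ρ n p.j _) (C_tower_A ρ n p.i _)
  rw [h, zero_smul, add_zero]

end MonAct

section VecAct
variable {V : Type*} [AddCommGroup V] [Module ℂ V] {ρ : HCRep V} {w : V} {φa φb : ℤ → ℂ}

lemma actA (hW : ρ.IsWhittaker w φa φb) (n : ℕ) (hn : 1 ≤ n) (p : HCIdx) :
    ρ.A (n:ℤ) (ρ.mon p w) = φa (n:ℤ) • ρ.mon p w
      + ((p.j n : ℂ) * ((n:ℂ) * ρ.κ)) • ρ.mon (pJ n p) w := by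
  have h := LinearMap.congr_fun (A_mon ρ n hn p) w
  simp only [Module.End.mul_apply, LinearMap.add_apply, LinearMap.smul_apply] at h
  rw [h, hW.hwA (n:ℤ) (by omega), map_smul]

lemma actB (hW : ρ.IsWhittaker w φa φb) (n : ℕ) (hn : 1 ≤ n) (p : HCIdx) :
    ρ.B (n:ℤ) (ρ.mon p w) = φb (n:ℤ) • ρ.mon p w
      + ((p.i n : ℂ) * ((n:ℂ) * ρ.κ)) • ρ.mon (pI n p) w := by
  have h := LinearMap.congr_fun (B_mon ρ n hn p) w
  simp only [Module.End.mul_apply, LinearMap.add_apply, LinearMap.smul_apply] at h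
  rw [h, hW.hwB (n:ℤ) (by omega), map_smul]

lemma actC_del (hW : ρ.IsWhittaker w φa φb) (n : ℕ) (hn : 1 ≤ n) (p : HCIdx)
    (hmem : n ∈ p.K) :
    ∃ ε : ℂ, (ε = ρ.κ ∨ ε = -ρ.κ) ∧
      ρ.C ((n:ℤ)-1) (ρ.mon p w) = ε • ρ.mon (pK n p) w := by
  obtain ⟨σ, ε, hσ, hε, hcomm⟩ := C_mon_del ρ n hn p hmem
  refine ⟨ε, hε, ?_⟩
  have h := LinearMap.congr_fun hcomm w
  simp only [Module.End.mul_apply, LinearMap.add_apply, LinearMap.smul_apply] at h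
  rw [h, hW.hwC ((n:ℤ)-1) (by omega), map_zero, smul_zero, zero_add]

lemma actC_zero (hW : ρ.IsWhittaker w φa φb) (n : ℕ) (hn : 1 ≤ n) (p : HCIdx)
    (hmem : n ∉ p.K) : ρ.C ((n:ℤ)-1) (ρ.mon p w) = 0 := by
  obtain ⟨σ, hσ, hcomm⟩ := C_mon_comm ρ n p hmem
  have h := LinearMap.congr_fun hcomm w
  simp only [Module.End.mul_apply, LinearMap.smul_apply] at h
  rw [h, hW.hwC ((n:ℤ)-1) (by omega), map_zero, smul_zero]

end VecAct

section Main
variable {V : Type*} [AddCommGroup V] [Module ℂ V] {ρ : HCRep V} {w : V} {φa φb : ℤ → ℂ}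

/-- the PBW basis attached to a Whittaker structure -/
noncomputable def bW (hW : ρ.IsWhittaker w φa φb) : Module.Basis HCIdx ℂ V :=
  Module.Basis.mk hW.indep (by rw [hW.span])

lemma bW_apply (hW : ρ.IsWhittaker w φa φb) (p : HCIdx) : bW hW p = ρ.mon p w :=
  Module.Basis.mk_apply _ _ _

/-- measure of a vector w.r.t. a basis indexed by `HCIdx` -/
noncomputable def μm (b : Module.Basis HCIdx ℂ V) (v : V) : ℕ :=
  ∑ p ∈ (b.repr v).support, (1 + deg p)

lemma step (b : Module.Basis HCIdx ℂ V) (OP : Module.End ℂ V) (δf : HCIdx → HCIdx)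
    (Good : HCIdx → Prop) (coef : HCIdx → ℂ)
    (hact : ∀ p, OP (b p) = coef p • b (δf p))
    (hgood : ∀ p, coef p ≠ 0 → Good p)
    (hinj : ∀ p q, Good p → Good q → δf p = δf q → p = q)
    (hdeg : ∀ p, Good p → deg (δf p) + 1 = deg p)
    (v : V) (p0 : HCIdx) (hp0 : p0 ∈ (b.repr v).support) (hg : Good p0)
    (hc0 : coef p0 ≠ 0) :
    OP v ≠ 0 ∧ μm b (OP v) < μm b v := by
  classical
  have hv : v = ∑ p ∈ (b.repr v).support, (b.repr v) p • b p := by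
    conv_lhs => rw [← b.linearCombination_repr v]
    rw [Finsupp.linearCombination_apply, Finsupp.sum]
  have hOP : OP v = ∑ p ∈ (b.repr v).support, ((b.repr v) p * coef p) • b (δf p) := by
    conv_lhs => rw [hv]
    rw [map_sum]
    exact Finset.sum_congr rfl (fun p _ => by rw [map_smul, hact, smul_smul])
  have hrepr : b.repr (OP v)
      = ∑ p ∈ (b.repr v).support, ((b.repr v) p * coef p) • Finsupp.single (δf p) (1:ℂ) := by
    rw [hOP, map_sum]
    exact Finset.sum_congr rfl (fun p _ => by rw [map_smul, b.repr_self])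
  have hval : b.repr (OP v) (δf p0) = (b.repr v) p0 * coef p0 := by
    rw [hrepr, Finsupp.finset_sum_apply]
    rw [Finset.sum_eq_single_of_mem p0 hp0 ?_]
    · simp [Finsupp.single_apply]
    · intro p hp hne
      by_cases hcp : coef p = 0
      · simp [hcp]
      · have hδ : δf p ≠ δf p0 := fun he => hne (hinj p p0 (hgood p hcp) hg he)
        simp [Finsupp.single_apply, hδ]
  have hF0 : (b.repr v) p0 ≠ 0 := Finsupp.mem_support_iff.mp hp0
  constructor
  · intro h0
    rw [h0, map_zero] at hval
    exact (mul_ne_zero hF0 hc0) hval.symm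
  · have hsupp : (b.repr (OP v)).support
        ⊆ ((b.repr v).support.filter Good).image δf := by
      intro q hq
      rw [Finsupp.mem_support_iff, hrepr, Finsupp.finset_sum_apply] at hq
      obtain ⟨p, hp, hne⟩ := Finset.exists_ne_zero_of_sum_ne_zero hq
      have hcp : coef p ≠ 0 := fun h => hne (by simp [h])
      have hq' : δf p = q := by
        by_contra hne'
        exact hne (by simp [Finsupp.single_apply, hne'])
      exact Finset.mem_image.mpr ⟨p, Finset.mem_filter.mpr ⟨hp, hgood p hcp⟩, hq'⟩
    calc μm b (OP v) ≤ ∑ q ∈ ((b.repr v).support.filter Good).image δf, (1 + deg q) :=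
          Finset.sum_le_sum_of_subset hsupp
      _ = ∑ p ∈ (b.repr v).support.filter Good, (1 + deg (δf p)) :=
          Finset.sum_image (fun p hp q hq he =>
            hinj p q (Finset.mem_filter.mp hp).2 (Finset.mem_filter.mp hq).2 he)
      _ = ∑ p ∈ (b.repr v).support.filter Good, deg p :=
          Finset.sum_congr rfl (fun p hp => by
            have := hdeg p (Finset.mem_filter.mp hp).2; omega)
      _ < ∑ p ∈ (b.repr v).support.filter Good, (1 + deg p) :=
          Finset.sum_lt_sum_of_nonempty ⟨p0, Finset.mem_filter.mpr ⟨hp0, hg⟩⟩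
            (fun p _ => by omega)
      _ ≤ μm b v := Finset.sum_le_sum_of_subset (Finset.filter_subset _ _)

lemma tower_zero {f : ℕ → Module.End ℂ V} : tower f 0 = 1 := rfl

lemma mon_pTriv (ρ : HCRep V) : ρ.mon pTriv = 1 := by
  rw [mon_eq]
  have h1 : pTriv.K = (∅ : Finset ℕ) := rfl
  have h2 : pTriv.i = (0 : ℕ →₀ ℕ) := rfl
  have h3 : pTriv.j = (0 : ℕ →₀ ℕ) := rfl
  rw [h1, h2, h3]
  simp [tower_zero]

end Main

section Key
variable {V : Type*} [AddCommGroup V] [Module ℂ V] {ρ : HCRep V} {w : V} {φa φb : ℤ → ℂ}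

lemma finsupp_exists_ne_zero {f : ℕ →₀ ℕ} (h : f ≠ 0) : ∃ n, f n ≠ 0 := by
  by_contra hcon
  push_neg at hcon
  exact h (Finsupp.ext hcon)

lemma key (hW : ρ.IsWhittaker w φa φb) (hκ : ρ.κ ≠ 0)
    (W : Submodule ℂ V) (hinv : ρ.Invariant W) :
    ∀ k : ℕ, ∀ v : V, μm (bW hW) v ≤ k → v ∈ W → v ≠ 0 → w ∈ W := by
  classical
  intro k
  induction k with
  | zero =>
    intro v hμ hvW hv0
    exfalso
    have hne : ((bW hW).repr v).support.Nonempty := by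
      rw [Finsupp.support_nonempty_iff]
      intro h0
      exact hv0 ((bW hW).repr.map_eq_zero_iff.mp h0)
    obtain ⟨p, hp⟩ := hne
    have hle : 1 + deg p ≤ ∑ q ∈ ((bW hW).repr v).support, (1 + deg q) :=
      Finset.single_le_sum (f := fun q => 1 + deg q) (fun _ _ => Nat.zero_le _) hp
    unfold μm at hμ
    omega
  | succ k ih =>
    intro v hμ hvW hv0
    by_cases hall : ∀ p ∈ ((bW hW).repr v).support, deg p = 0
    · -- v is a multiple of w
      have hsub : ((bW hW).repr v).support ⊆ {pTriv} := fun p hp => by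
        rw [Finset.mem_singleton]
        exact deg_eq_zero (hall p hp)
      have hsingle : (bW hW).repr v = Finsupp.single pTriv (((bW hW).repr v) pTriv) :=
        Finsupp.support_subset_singleton.mp hsub
      set c : ℂ := ((bW hW).repr v) pTriv with hcdef
      have hv : v = c • (bW hW) pTriv := by
        apply (bW hW).repr.injective
        rw [map_smul, (bW hW).repr_self, hsingle]
        simp
      have hc : c ≠ 0 := by
        intro h0
        rw [h0, zero_smul] at hv
        exact hv0 hv
      have hbw : (bW hW) pTriv = w := by
        rw [bW_apply, mon_pTriv]
        rfl
      have h2 : w = c⁻¹ • v := by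
        rw [hv, smul_smul, inv_mul_cancel₀ hc, one_smul, hbw]
      rw [h2]
      exact W.smul_mem _ hvW
    · push_neg at hall
      obtain ⟨p0, hp0, hd0⟩ := hall
      have h3 : p0.j ≠ 0 ∨ p0.i ≠ 0 ∨ p0.K ≠ ∅ := by
        by_contra hcon
        push_neg at hcon
        obtain ⟨h1, h2, h3⟩ := hcon
        exact hd0 (by simp [deg, h1, h2, h3])
      rcases h3 with hj | hi | hK
      · -- apply A n - φa n
        obtain ⟨n, hn⟩ := finsupp_exists_ne_zero hj
        have hn1 : 1 ≤ n := by
          rcases Nat.eq_zero_or_pos n with rfl | h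
          · exact absurd p0.hj hn
          · exact h
        set OP : Module.End ℂ V := ρ.A (n:ℤ) - φa (n:ℤ) • 1 with hOP
        have hact : ∀ p, OP ((bW hW) p)
            = ((p.j n : ℂ) * ((n:ℂ) * ρ.κ)) • (bW hW) (pJ n p) := by
          intro p
          rw [bW_apply, bW_apply]
          simp only [hOP, LinearMap.sub_apply, LinearMap.smul_apply, Module.End.one_apply]
          rw [actA hW n hn1 p, add_sub_cancel_left]
        obtain ⟨hne, hlt⟩ := step (bW hW) OP (pJ n) (fun p => p.j n ≠ 0)
          (fun p => ((p.j n : ℂ) * ((n:ℂ) * ρ.κ))) hact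
          (fun p hc => by
            intro h0
            exact hc (by simp [h0]))
          (fun p q hp hq => pJ_inj hp hq)
          (fun p hp => deg_pJ hp)
          v p0 hp0 hn
          (mul_ne_zero (Nat.cast_ne_zero.mpr hn) (mul_ne_zero (by
            exact_mod_cast Nat.cast_ne_zero.mpr (by omega)) hκ))
        have hOPW : OP v ∈ W := by
          have h1 := (hinv v hvW (n:ℤ)).1
          simp only [hOP, LinearMap.sub_apply, LinearMap.smul_apply, Module.End.one_apply]
          exact W.sub_mem h1 (W.smul_mem _ hvW)
        exact ih (OP v) (by omega) hOPW hne
      · -- apply B n - φb n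
        obtain ⟨n, hn⟩ := finsupp_exists_ne_zero hi
        have hn1 : 1 ≤ n := by
          rcases Nat.eq_zero_or_pos n with rfl | h
          · exact absurd p0.hi hn
          · exact h
        set OP : Module.End ℂ V := ρ.B (n:ℤ) - φb (n:ℤ) • 1 with hOP
        have hact : ∀ p, OP ((bW hW) p)
            = ((p.i n : ℂ) * ((n:ℂ) * ρ.κ)) • (bW hW) (pI n p) := by
          intro p
          rw [bW_apply, bW_apply]
          simp only [hOP, LinearMap.sub_apply, LinearMap.smul_apply, Module.End.one_apply]
          rw [actB hW n hn1 p, add_sub_cancel_left]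
        obtain ⟨hne, hlt⟩ := step (bW hW) OP (pI n) (fun p => p.i n ≠ 0)
          (fun p => ((p.i n : ℂ) * ((n:ℂ) * ρ.κ))) hact
          (fun p hc => by
            intro h0
            exact hc (by simp [h0]))
          (fun p q hp hq => pI_inj hp hq)
          (fun p hp => deg_pI hp)
          v p0 hp0 hn
          (mul_ne_zero (Nat.cast_ne_zero.mpr hn) (mul_ne_zero (by
            exact_mod_cast Nat.cast_ne_zero.mpr (by omega)) hκ))
        have hOPW : OP v ∈ W := by
          have h1 := (hinv v hvW (n:ℤ)).2.1
          simp only [hOP, LinearMap.sub_apply, LinearMap.smul_apply, Module.End.one_apply]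
          exact W.sub_mem h1 (W.smul_mem _ hvW)
        exact ih (OP v) (by omega) hOPW hne
      · -- apply C (n - 1/2)
        obtain ⟨n, hnK⟩ := Finset.nonempty_iff_ne_empty.mpr hK
        have hn1 : 1 ≤ n := by
          rcases Nat.eq_zero_or_pos n with rfl | h
          · exact absurd hnK p0.hK
          · exact h
        set OP : Module.End ℂ V := ρ.C ((n:ℤ) - 1) with hOP
        set coef : HCIdx → ℂ := fun p =>
          if h : n ∈ p.K then (actC_del hW n hn1 p h).choose else 0 with hcoef
        have hact : ∀ p, OP ((bW hW) p) = coef p • (bW hW) (pK n p) := by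
          intro p
          rw [bW_apply, bW_apply]
          by_cases hp : n ∈ p.K
          · rw [hcoef]
            simp only [dif_pos hp]
            exact (actC_del hW n hn1 p hp).choose_spec.2
          · rw [hcoef]
            simp only [dif_neg hp, zero_smul]
            exact actC_zero hW n hn1 p hp
        have hcoef_ne : ∀ p, n ∈ p.K → coef p ≠ 0 := by
          intro p hp
          rw [hcoef]
          simp only [dif_pos hp]
          rcases (actC_del hW n hn1 p hp).choose_spec.1 with h | h
          · rw [h]; exact hκ
          · rw [h]; exact neg_ne_zero.mpr hκ
        obtain ⟨hne, hlt⟩ := step (bW hW) OP (pK n) (fun p => n ∈ p.K) coef hact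
          (fun p hc => by
            by_contra hp
            exact hc (by rw [hcoef]; simp [dif_neg hp]))
          (fun p q hp hq => pK_inj hp hq)
          (fun p hp => deg_pK hp)
          v p0 hp0 hnK (hcoef_ne p0 hnK)
        have hOPW : OP v ∈ W := (hinv v hvW ((n:ℤ) - 1)).2.2
        exact ih (OP v) (by omega) hOPW hne

end Key

section Final
variable {V : Type*} [AddCommGroup V] [Module ℂ V] {ρ : HCRep V} {w : V} {φa φb : ℤ → ℂ}

lemma tower_mem (W : Submodule ℂ V) (f : ℕ → Module.End ℂ V)
    (hf : ∀ m, ∀ v ∈ W, f m v ∈ W) : ∀ N, ∀ v ∈ W, tower f N v ∈ W := by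
  intro N
  induction N with
  | zero => intro v hv; exact hv
  | succ N ih =>
    intro v hv
    rw [tower_succ, Module.End.mul_apply]
    exact hf _ _ (ih v hv)

lemma powEnd_mem (W : Submodule ℂ V) (X : Module.End ℂ V)
    (hX : ∀ v ∈ W, X v ∈ W) : ∀ e, ∀ v ∈ W, (X ^ e) v ∈ W := by
  intro e
  induction e with
  | zero => intro v hv; exact hv
  | succ e ih =>
    intro v hv
    rw [pow_succ', Module.End.mul_apply]
    exact hX _ (ih v hv)

lemma mon_mem (ρ : HCRep V) (W : Submodule ℂ V) (hinv : ρ.Invariant W) (p : HCIdx)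
    {v : V} (hv : v ∈ W) : ρ.mon p v ∈ W := by
  rw [mon_eq, Module.End.mul_apply, Module.End.mul_apply]
  apply tower_mem W _ (fun m u hu => by
    by_cases hm : m ∈ p.K
    · simpa only [fCs, if_pos hm] using (hinv u hu (-(m:ℤ))).2.2
    · simpa only [fCs, if_neg hm, Module.End.one_apply] using hu)
  apply tower_mem W _ (fun m u hu =>
    powEnd_mem W _ (fun x hx => (hinv x hx (-(m:ℤ))).2.1) (p.j m) u hu)
  exact tower_mem W _ (fun m u hu =>
    powEnd_mem W _ (fun x hx => (hinv x hx (-(m:ℤ))).1) (p.i m) u hu) _ v hv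

/-- increment `i` at 1 -/
noncomputable def pInc (p : HCIdx) : HCIdx :=
  ⟨p.i.update 1 (p.i 1 + 1), p.j, p.K, by
    simp [Finsupp.coe_update, Function.update_of_ne (show (0:ℕ) ≠ 1 by omega), p.hi],
    p.hj, p.hK⟩

@[simp] lemma pInc_i (p : HCIdx) : (pInc p).i = p.i.update 1 (p.i 1 + 1) := rfl
@[simp] lemma pInc_j (p : HCIdx) : (pInc p).j = p.j := rfl
@[simp] lemma pInc_K (p : HCIdx) : (pInc p).K = p.K := rfl

lemma support_eq_empty_of_sup_eq_zero {i : ℕ →₀ ℕ} (hi0 : i 0 = 0)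
    (h : i.support.sup id = 0) : i = 0 := by
  ext m
  rcases Nat.eq_zero_or_pos m with rfl | hm
  · simp [hi0]
  · rcases eq_or_ne (i m) 0 with h0 | h0
    · simp [h0]
    · exfalso
      have := Finset.le_sup (f := id) (Finsupp.mem_support_iff.mpr h0)
      simp only [id] at this
      omega

lemma Aneg_mon (ρ : HCRep V) (p : HCIdx) : ρ.A (-1) * ρ.mon p = ρ.mon (pInc p) := by
  rw [mon_eq, mon_eq]
  simp only [pInc_i, pInc_j, pInc_K]
  set X : Module.End ℂ V := ρ.A (-1) with hX
  have hc : X * tower (fCs ρ p.K) (p.K.sup id) = tower (fCs ρ p.K) (p.K.sup id) * X :=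
    A_tower_C ρ X (fun j => commAC ρ _ _) _ _
  have hb : X * tower (fBs ρ p.j) (p.j.support.sup id)
      = tower (fBs ρ p.j) (p.j.support.sup id) * X := by
    apply tower_comm
    intro m h1 h2
    have hcm : Commute X (ρ.B (-(m:ℤ))) := commAB ρ (-1) (-(m:ℤ)) (by omega)
    exact (hcm.pow_right (p.j m)).eq
  have hsupp : (p.i.update 1 (p.i 1 + 1)).support = insert 1 p.i.support := by
    classical
    exact Finsupp.support_update_ne_zero (f := p.i) (a := 1) (b := p.i 1 + 1) (Nat.succ_ne_zero _)
  have hkey : X * tower (fAs ρ p.i) (p.i.support.sup id)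
      = tower (fAs ρ (p.i.update 1 (p.i 1 + 1)))
          ((p.i.update 1 (p.i 1 + 1)).support.sup id) := by
    have hfun : Function.update (fAs ρ p.i) 1 (X * fAs ρ p.i 1)
        = fAs ρ (p.i.update 1 (p.i 1 + 1)) := by
      funext m
      rcases eq_or_ne m 1 with rfl | hm
      · simp only [Function.update_self, fAs, Finsupp.coe_update, hX, Nat.cast_one]
        exact (pow_succ' _ _).symm
      · simp [fAs, Function.update_of_ne hm, Finsupp.coe_update]
    have hsup : (p.i.update 1 (p.i 1 + 1)).support.sup id = max 1 (p.i.support.sup id) := by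
      rw [hsupp, Finset.sup_insert]
      rfl
    rcases Nat.eq_zero_or_pos (p.i.support.sup id) with h0 | hpos
    · -- p.i = 0
      have hi0 : p.i = 0 := support_eq_empty_of_sup_eq_zero p.hi h0
      rw [h0, tower_zero, mul_one, hsup, h0]
      have : max 1 0 = 1 := rfl
      rw [this]
      rw [show tower (fAs ρ (p.i.update 1 (p.i 1 + 1))) 1
          = fAs ρ (p.i.update 1 (p.i 1 + 1)) 1 * tower (fAs ρ (p.i.update 1 (p.i 1 + 1))) 0
          from rfl, tower_zero, mul_one]
      simp [fAs, Finsupp.coe_update, hi0, hX]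
    · have hle : 1 ≤ p.i.support.sup id := hpos
      rw [hsup, max_eq_right hle, ← hfun]
      exact tower_mul_update _ _ le_rfl hle (fun m hm1 hm2 => by
        have hcm : Commute X (ρ.A (-(m:ℤ))) := commAA ρ _ _
        exact (hcm.pow_right (p.i m)).eq)
  calc X * (tower (fCs ρ p.K) (p.K.sup id) * tower (fBs ρ p.j) (p.j.support.sup id)
        * tower (fAs ρ p.i) (p.i.support.sup id))
      = (X * tower (fCs ρ p.K) (p.K.sup id))
        * (tower (fBs ρ p.j) (p.j.support.sup id)
          * tower (fAs ρ p.i) (p.i.support.sup id)) := by rw [mul_assoc, ← mul_assoc]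
    _ = tower (fCs ρ p.K) (p.K.sup id) * ((X * tower (fBs ρ p.j) (p.j.support.sup id))
        * tower (fAs ρ p.i) (p.i.support.sup id)) := by rw [hc, mul_assoc, ← mul_assoc X]
    _ = tower (fCs ρ p.K) (p.K.sup id) * (tower (fBs ρ p.j) (p.j.support.sup id)
        * (X * tower (fAs ρ p.i) (p.i.support.sup id))) := by rw [hb, mul_assoc]
    _ = _ := by rw [hkey, ← mul_assoc]

lemma pInc_ne_pTriv (p : HCIdx) : pInc p ≠ pTriv := by
  intro h
  have := congrArg (fun q => q.i 1) h
  simp only [pInc_i, Finsupp.coe_update, Function.update_self] at this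
  have h2 : pTriv.i 1 = 0 := rfl
  omega

end Final

/-- The Whittaker module `W_hc(φ)` over the Heisenberg-Clifford algebra is
simple if and only if `φ(k) ≠ 0`. -/
theorem hc_whittaker_simple_iff {V : Type*} [AddCommGroup V] [Module ℂ V]
    (ρ : HCRep V) (w : V) (φa φb : ℤ → ℂ) (hW : ρ.IsWhittaker w φa φb) :
    ρ.IsSimple ↔ ρ.κ ≠ 0 := by
  classical
  constructor
  · -- simple → κ ≠ 0 (contrapositive: κ = 0 → not simple)
    intro hsimp hκ0
    obtain ⟨-, hs⟩ := hsimp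
    set W : Submodule ℂ V := LinearMap.range (ρ.A (-1)) with hWdef
    have hinv : ρ.Invariant W := by
      rintro u hu n
      obtain ⟨x, rfl⟩ := hu
      have hAB : ρ.A (-1) * ρ.B n = ρ.B n * ρ.A (-1) := by
        rw [mul_A_B, hκ0]
        split <;> simp
      have hAA : ρ.A (-1) * ρ.A n = ρ.A n * ρ.A (-1) := commAA ρ _ _
      have hAC : ρ.A (-1) * ρ.C n = ρ.C n * ρ.A (-1) := commAC ρ _ _
      refine ⟨⟨ρ.A n x, ?_⟩, ⟨ρ.B n x, ?_⟩, ⟨ρ.C n x, ?_⟩⟩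
      · have := LinearMap.congr_fun hAA x
        simpa only [Module.End.mul_apply] using this
      · have := LinearMap.congr_fun hAB x
        simpa only [Module.End.mul_apply] using this
      · have := LinearMap.congr_fun hAC x
        simpa only [Module.End.mul_apply] using this
    have hmon : ρ.A (-1) w = ρ.mon (pInc pTriv) w := by
      have h := LinearMap.congr_fun (Aneg_mon ρ pTriv) w
      rw [Module.End.mul_apply, mon_pTriv, Module.End.one_apply] at h
      exact h
    rcases hs W hinv with hbot | htop
    · -- A(-1) w would be 0
      have hmem : ρ.A (-1) w ∈ W := ⟨w, rfl⟩
      rw [hbot, Submodule.mem_bot] at hmem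
      rw [hmon] at hmem
      exact hW.indep.ne_zero (pInc pTriv) hmem
    · -- w would be in the range of A(-1)
      have hw : w ∈ W := htop ▸ Submodule.mem_top
      obtain ⟨v, hv⟩ := hw
      set b := bW hW with hbdef
      have hvsum : v = ∑ p ∈ (b.repr v).support, (b.repr v) p • b p := by
        conv_lhs => rw [← b.linearCombination_repr v]
        rw [Finsupp.linearCombination_apply, Finsupp.sum]
      have hAv : ρ.A (-1) v = ∑ p ∈ (b.repr v).support, (b.repr v) p • b (pInc p) := by
        conv_lhs => rw [hvsum]
        rw [map_sum]
        refine Finset.sum_congr rfl (fun p _ => ?_)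
        rw [map_smul]
        congr 1
        have h := LinearMap.congr_fun (Aneg_mon ρ p) w
        rw [Module.End.mul_apply] at h
        rw [hbdef, bW_apply, bW_apply]
        exact h
      have hreprw : b.repr w = Finsupp.single pTriv 1 := by
        have : w = b pTriv := by
          rw [hbdef, bW_apply, mon_pTriv]
          rfl
        rw [this, b.repr_self]
      have h1 : b.repr w pTriv = 1 := by rw [hreprw]; simp
      have h0 : b.repr w pTriv = 0 := by
        rw [← hv, hAv, map_sum, Finsupp.finset_sum_apply]
        apply Finset.sum_eq_zero
        intro p _
        rw [map_smul, b.repr_self]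
        simp [Finsupp.single_apply, pInc_ne_pTriv p]
      rw [h1] at h0
      exact one_ne_zero h0
  · -- κ ≠ 0 → simple
    intro hκ
    constructor
    · refine ⟨w, ?_⟩
      have h := hW.indep.ne_zero pTriv
      rwa [mon_pTriv, Module.End.one_apply] at h
    · intro W hinv
      by_cases hbot : W = ⊥
      · exact Or.inl hbot
      · right
        obtain ⟨v, hvW, hv0⟩ := Submodule.ne_bot_iff W |>.mp hbot
        have hwW : w ∈ W := key hW hκ W hinv (μm (bW hW) v) v le_rfl hvW hv0
        rw [eq_top_iff, ← hW.span, Submodule.span_le]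
        rintro - ⟨p, rfl⟩
        exact mon_mem ρ W hinv p hwW
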